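/- Let γ ∈ (1/3, 1] and δ > 0 with 3γ > 1 + 2δ. Then for all integers k, l with 0 < k < l < 2k and all t ≥ 0, (l−k)·t/l² · e^{−θ ⟨t⟩^{γ−δ} (l−k)/k^{1−γ}} ≤ C |k|^{−2 + (1−γ)/(γ−δ)} for constants C, depending only on θ > 0, γ, δ, and in particular this quantity is uniformly bounded. -/
import Mathlib

/-- Japanese bracket of a real number. -/
noncomputable def jb (t : ℝ) : ℝ := Real.sqrt (1 + t ^ 2)

lemma rpow_mul_exp_neg_le (p : ℝ) (hp : 0 < p) {z : ℝ} (hz : 0 < z) :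
    z ^ p * Real.exp (-z) ≤ (Nat.factorial ⌈p⌉₊ : ℝ) + 1 := by
  set n := ⌈p⌉₊ with hn
  have hzn : (0:ℝ) ≤ z ^ n := pow_nonneg hz.le n
  have h1 : z ^ p ≤ 1 + z ^ n := by
    rcases le_total z 1 with h | h
    · have := Real.rpow_le_one hz.le h hp.le
      linarith
    · have h2 : z ^ p ≤ z ^ (n : ℝ) :=
        Real.rpow_le_rpow_of_exponent_le h (Nat.le_ceil p)
      rw [Real.rpow_natCast] at h2
      linarith
  have h2 : z ^ n ≤ (Nat.factorial n : ℝ) * Real.exp z := by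
    have := Real.pow_div_factorial_le_exp (x := z) hz.le n
    rw [div_le_iff₀ (by positivity)] at this
    linarith
  have hexp : (0:ℝ) < Real.exp (-z) := Real.exp_pos _
  have h3 : Real.exp (-z) ≤ 1 := Real.exp_le_one_iff.mpr (by linarith)
  calc z ^ p * Real.exp (-z) ≤ (1 + z ^ n) * Real.exp (-z) := by nlinarith
    _ ≤ (1 + (Nat.factorial n : ℝ) * Real.exp z) * Real.exp (-z) := by nlinarith
    _ = Real.exp (-z) + (Nat.factorial n : ℝ) * (Real.exp z * Real.exp (-z)) := by ring
    _ = Real.exp (-z) + (Nat.factorial n : ℝ) := by rw [← Real.exp_add]; simp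
    _ ≤ (Nat.factorial n : ℝ) + 1 := by linarith

theorem echo_estimate (γ δ θ : ℝ) (hγ0 : 1 / 3 < γ) (hγ1 : γ ≤ 1) (hδ : 0 < δ)
    (hγδ : 3 * γ > 1 + 2 * δ) (hθ : 0 < θ) :
    ∃ C > 0, ∀ (k l : ℤ), 0 < k → k < l → l < 2 * k → ∀ t : ℝ, 0 ≤ t →
      ((l : ℝ) - k) * t / (l : ℝ) ^ 2 *
          Real.exp (-θ * jb t ^ (γ - δ) * ((l : ℝ) - k) / (k : ℝ) ^ (1 - γ)) ≤
        C * |(k : ℝ)| ^ (-2 + (1 - γ) / (γ - δ)) := by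
  have hσ : 0 < γ - δ := by linarith
  set σ := γ - δ with hσdef
  set p := 1 / σ with hpdef
  have hp : 0 < p := by positivity
  have hσp : σ * p = 1 := by rw [hpdef]; field_simp
  have hp1 : 1 ≤ p := by
    rw [hpdef, le_div_iff₀ hσ]; linarith
  set Cp : ℝ := (Nat.factorial ⌈p⌉₊ : ℝ) + 1 with hCp
  have hCp0 : 0 < Cp := by positivity
  refine ⟨Cp * θ ^ (-p), by positivity, ?_⟩
  intro k l hk hkl _ t ht
  have hK1 : (1:ℝ) ≤ (k:ℝ) := by exact_mod_cast hk
  have hK0 : (0:ℝ) < (k:ℝ) := by linarith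
  have hd1 : (1:ℝ) ≤ (l:ℝ) - k := by
    have h : k + 1 ≤ l := hkl
    have : ((k:ℝ) + 1) ≤ (l:ℝ) := by exact_mod_cast h
    linarith
  have hL : (k:ℝ) ≤ (l:ℝ) := by linarith
  have hL0 : (0:ℝ) < (l:ℝ) := by linarith
  set d : ℝ := (l:ℝ) - k with hddef
  have hd0 : (0:ℝ) < d := by linarith
  set x : ℝ := jb t with hxdef
  have hx1 : 1 ≤ x := by
    rw [hxdef, jb]
    nlinarith [Real.sq_sqrt (by positivity : (0:ℝ) ≤ 1 + t^2),
      Real.sqrt_nonneg (1 + t^2)]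
  have hx0 : 0 < x := by linarith
  have htx : t ≤ x := by
    rw [hxdef, jb]
    nlinarith [Real.sq_sqrt (by positivity : (0:ℝ) ≤ 1 + t^2),
      Real.sqrt_nonneg (1 + t^2)]
  set a : ℝ := θ * d / (k:ℝ) ^ (1 - γ) with hadef
  have hKp : (0:ℝ) < (k:ℝ) ^ (1 - γ) := Real.rpow_pos_of_pos hK0 _
  have ha : 0 < a := by rw [hadef]; positivity
  have harg : -θ * x ^ σ * d / (k:ℝ) ^ (1 - γ) = -(a * x ^ σ) := by
    rw [hadef]; ring
  have hxσ : (0:ℝ) < x ^ σ := Real.rpow_pos_of_pos hx0 _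
  -- key: x * exp (-(a * x^σ)) ≤ Cp * a ^ (-p)
  have key : x * Real.exp (-(a * x ^ σ)) ≤ Cp * a ^ (-p) := by
    set z : ℝ := a * x ^ σ with hzdef
    have hz : 0 < z := by positivity
    have hap0 : (0:ℝ) < a ^ p := Real.rpow_pos_of_pos ha p
    have hzp : z ^ p = a ^ p * x := by
      rw [hzdef, Real.mul_rpow ha.le hxσ.le, ← Real.rpow_mul hx0.le, hσp,
        Real.rpow_one]
    have hxz : x = z ^ p * a ^ (-p) := by
      rw [hzp, Real.rpow_neg ha.le]
      field_simp
    calc x * Real.exp (-z) = (z ^ p * Real.exp (-z)) * a ^ (-p) := by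
          rw [hxz]; ring
      _ ≤ Cp * a ^ (-p) := by
          have h := rpow_mul_exp_neg_le p hp hz
          have hap : (0:ℝ) < a ^ (-p) := Real.rpow_pos_of_pos ha _
          rw [hCp]
          nlinarith
  have step1 : d * t / (l:ℝ) ^ 2 * Real.exp (-(a * x ^ σ)) ≤
      d / (k:ℝ) ^ 2 * (x * Real.exp (-(a * x ^ σ))) := by
    have he : (0:ℝ) < Real.exp (-(a * x ^ σ)) := Real.exp_pos _
    have hk2 : (0:ℝ) < (k:ℝ)^2 := by positivity
    have hl2 : (k:ℝ)^2 ≤ (l:ℝ)^2 := pow_le_pow_left₀ hK0.le hL 2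
    have h1 : d * t / (l:ℝ)^2 ≤ d * x / (k:ℝ)^2 :=
      div_le_div₀ (by positivity) (mul_le_mul_of_nonneg_left htx hd0.le) hk2 hl2
    calc d * t / (l:ℝ)^2 * Real.exp (-(a * x ^ σ))
        ≤ d * x / (k:ℝ)^2 * Real.exp (-(a * x ^ σ)) :=
          mul_le_mul_of_nonneg_right h1 he.le
      _ = d / (k:ℝ)^2 * (x * Real.exp (-(a * x ^ σ))) := by ring
  -- algebra for a ^ (-p)
  set A : ℝ := (k:ℝ) ^ ((1 - γ) * p) with hAdef
  have hA0 : 0 < A := Real.rpow_pos_of_pos hK0 _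
  have hKinv : ((k:ℝ) ^ (1 - γ)) ^ (-p) = A⁻¹ := by
    rw [← Real.rpow_mul hK0.le, show (1-γ)*(-p) = -((1-γ)*p) by ring,
      Real.rpow_neg hK0.le, hAdef]
  have ha_eq : a ^ (-p) = θ ^ (-p) * d ^ (-p) * A := by
    rw [hadef, Real.div_rpow (by positivity) hKp.le,
      Real.mul_rpow hθ.le hd0.le, hKinv]
    field_simp
  have hd1p : d * d ^ (-p) ≤ 1 := by
    have : d * d ^ (-p) = d ^ (1 + (-p)) := by
      rw [Real.rpow_add hd0, Real.rpow_one]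
    rw [this]
    calc d ^ (1 + (-p)) ≤ d ^ (0:ℝ) :=
          Real.rpow_le_rpow_of_exponent_le hd1 (by linarith)
      _ = 1 := Real.rpow_zero d
  have hKfinal : |(k:ℝ)| ^ (-2 + (1 - γ) / σ) = A / (k:ℝ)^2 := by
    rw [abs_of_pos hK0, show (-2 + (1-γ)/σ : ℝ) = (1-γ)*p + (-2) by
        rw [hpdef]; ring,
      Real.rpow_add hK0, hAdef,
      show ((-2:ℝ)) = ((-2:ℤ):ℝ) by norm_num, Real.rpow_intCast]
    rw [zpow_neg, div_eq_mul_inv]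
    norm_num
  have step2 : d / (k:ℝ) ^ 2 * (Cp * a ^ (-p)) ≤
      Cp * θ ^ (-p) * |(k:ℝ)| ^ (-2 + (1 - γ) / σ) := by
    rw [ha_eq, hKfinal]
    have hθp : (0:ℝ) < θ ^ (-p) := Real.rpow_pos_of_pos hθ _
    have hk2 : (0:ℝ) < (k:ℝ)^2 := by positivity
    have hdp : (0:ℝ) < d ^ (-p) := Real.rpow_pos_of_pos hd0 _
    have heq : d / (k:ℝ)^2 * (Cp * (θ^(-p) * d^(-p) * A)) =
        Cp * θ^(-p) * (A / (k:ℝ)^2) * (d * d^(-p)) := by ring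
    rw [heq]
    have hpos : (0:ℝ) ≤ Cp * θ^(-p) * (A / (k:ℝ)^2) :=
      (mul_pos (mul_pos hCp0 hθp) (div_pos hA0 hk2)).le
    calc Cp * θ^(-p) * (A / (k:ℝ)^2) * (d * d^(-p))
        ≤ Cp * θ^(-p) * (A / (k:ℝ)^2) * 1 :=
          mul_le_mul_of_nonneg_left hd1p hpos
      _ = Cp * θ^(-p) * (A / (k:ℝ)^2) := mul_one _
  calc ((l : ℝ) - k) * t / (l : ℝ) ^ 2 *
        Real.exp (-θ * jb t ^ σ * ((l : ℝ) - k) / (k : ℝ) ^ (1 - γ))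
      = d * t / (l:ℝ)^2 * Real.exp (-(a * x ^ σ)) := by rw [← harg]
    _ ≤ d / (k:ℝ)^2 * (x * Real.exp (-(a * x ^ σ))) := step1
    _ ≤ d / (k:ℝ)^2 * (Cp * a ^ (-p)) := by
        have hdk : (0:ℝ) < d / (k:ℝ)^2 := by positivity
        exact mul_le_mul_of_nonneg_left key hdk.le
    _ ≤ Cp * θ ^ (-p) * |(k:ℝ)| ^ (-2 + (1 - γ) / σ) := step2
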